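/- arXiv:2509.03483 — 3 statements merged into one kernel-verified Lean document; each statement's English description precedes it below -/
import Mathlib

section
/- Let n ≥ 5 be a prime, let q be a power of an odd prime with n dividing q + 1, and set a = (q^n + 1)/((q+1)·n) - 1. Then (q+1)/n divides a, and the n-part of a equals the n-part of q + 1. -/
/-- Let `n ≥ 5` be a prime, `q` a power of an odd prime with `n ∣ q + 1`, and
`a = (q^n + 1)/((q+1)·n) - 1`. Then `(q+1)/n` divides `a` and the `n`-part of `a`
equals the `n`-part of `q + 1`. -/
theorem stmt4 (n : ℕ) (hn : n.Prime) (hn5 : 5 ≤ n) (q p e : ℕ) (hp : p.Prime)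
    (hpodd : Odd p) (he : 1 ≤ e) (hq : q = p ^ e) (hdvd : n ∣ q + 1) :
    (q + 1) / n ∣ ((q ^ n + 1) / ((q + 1) * n) - 1) ∧
      padicValNat n ((q ^ n + 1) / ((q + 1) * n) - 1) = padicValNat n (q + 1) := by
  haveI : Fact n.Prime := ⟨hn⟩
  have hodd : Odd n := hn.odd_of_ne_two (by omega)
  obtain ⟨k, hk⟩ := hdvd
  have hq3 : 3 ≤ q := by
    have hp3 : 3 ≤ p := by
      have := hp.two_le
      rcases hpodd with ⟨t, ht⟩; omega
    calc 3 ≤ p := hp3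
    _ = p ^ 1 := (pow_one p).symm
    _ ≤ p ^ e := Nat.pow_le_pow_right (by omega) he
    _ = q := hq.symm
  have hk1 : 1 ≤ k := Nat.one_le_iff_ne_zero.mpr (by rintro rfl; omega)
  have hnq : n ≤ q + 1 := by calc n = n * 1 := (mul_one n).symm
                                 _ ≤ n * k := Nat.mul_le_mul_left n hk1
                                 _ = q + 1 := hk.symm
  -- integer setup
  set X : ℤ := (q : ℤ) + 1 with hX
  have hXk : X = (n : ℤ) * k := by rw [hX]; exact_mod_cast congrArg (Nat.cast : ℕ → ℤ) hk
  have hnX : (n : ℤ) ∣ X := ⟨(k : ℤ), hXk⟩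
  set S : ℤ := ∑ i ∈ Finset.range (n - 1),
      X ^ i * (-1) ^ (n - (i + 2)) * (n.choose (i + 2) : ℤ) with hS
  -- key expansion
  have key : (q : ℤ) ^ n + 1 = n * X + X ^ 2 * S := by
    have hq' : (q : ℤ) = X + (-1) := by rw [hX]; ring
    rw [hq', add_pow]
    have h1 : n + 1 = (n - 1) + 1 + 1 := by omega
    rw [h1, Finset.sum_range_succ', Finset.sum_range_succ']
    have e0 : X ^ 0 * (-1 : ℤ) ^ (n - 0) * (n.choose 0 : ℤ) = -1 := by
      simp [hodd.neg_one_pow]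
    have e1 : X ^ (0 + 1) * (-1 : ℤ) ^ (n - (0 + 1)) * (n.choose (0 + 1) : ℤ) = n * X := by
      have : Even (n - 1) := Nat.Odd.sub_odd hodd odd_one
      simp [this.neg_one_pow]; ring
    rw [e0, e1, hS, Finset.mul_sum]
    have : ∑ i ∈ Finset.range (n - 1),
        X ^ (i + 1 + 1) * (-1 : ℤ) ^ (n - (i + 1 + 1)) * (n.choose (i + 1 + 1) : ℤ)
        = ∑ i ∈ Finset.range (n - 1),
          X ^ 2 * (X ^ i * (-1) ^ (n - (i + 2)) * (n.choose (i + 2) : ℤ)) := by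
      apply Finset.sum_congr rfl
      intro i _
      ring_nf
    rw [this]; ring
  -- n ∣ S
  have hSn : (n : ℤ) ∣ S := by
    apply Finset.dvd_sum
    intro i hi
    rcases Nat.eq_zero_or_pos i with rfl | hi1
    · have : (n : ℤ) ∣ (n.choose 2 : ℤ) := by
        exact_mod_cast Int.natCast_dvd_natCast.mpr (hn.dvd_choose_self (by omega) (by omega))
      simpa using Dvd.dvd.mul_left this _
    · have : (n : ℤ) ∣ X ^ i := dvd_pow hnX (by omega)
      exact Dvd.dvd.mul_right (Dvd.dvd.mul_right this _) _
  -- n^2 ∣ S + C(n,2)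
  have hS2 : (n : ℤ) ^ 2 ∣ S + (n.choose 2 : ℤ) := by
    have h2 : n - 1 = (n - 2) + 1 := by omega
    have hodd2 : Odd (n - 2) := Nat.Odd.sub_even (by omega) hodd (by decide)
    have e0 : X ^ 0 * (-1 : ℤ) ^ (n - (0 + 2)) * (n.choose (0 + 2) : ℤ)
        = -(n.choose 2 : ℤ) := by
      simp [hodd2.neg_one_pow]
    rw [hS, h2, Finset.sum_range_succ', e0]
    have : (∑ i ∈ Finset.range (n - 2),
        X ^ (i + 1) * (-1 : ℤ) ^ (n - (i + 1 + 2)) * (n.choose (i + 1 + 2) : ℤ))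
        + -(n.choose 2 : ℤ) + (n.choose 2 : ℤ)
        = ∑ i ∈ Finset.range (n - 2),
          X ^ (i + 1) * (-1 : ℤ) ^ (n - (i + 1 + 2)) * (n.choose (i + 1 + 2) : ℤ) := by ring
    rw [this]
    apply Finset.dvd_sum
    intro i hi
    simp only [Finset.mem_range] at hi
    rcases eq_or_lt_of_le (show i + 1 + 2 ≤ n by omega) with heq | hlt
    · -- i + 3 = n, choose = 1, X^(i+1) has n^2
      have : (n : ℤ) ^ 2 ∣ X ^ (i + 1) := by
        calc (n : ℤ) ^ 2 ∣ (n : ℤ) ^ (i + 1) := pow_dvd_pow _ (by omega)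
          _ ∣ X ^ (i + 1) := pow_dvd_pow_of_dvd hnX _
      exact Dvd.dvd.mul_right (Dvd.dvd.mul_right this _) _
    · have hdX : (n : ℤ) ∣ X ^ (i + 1) := dvd_pow hnX (by omega)
      have hdC : (n : ℤ) ∣ (n.choose (i + 1 + 2) : ℤ) :=
        Int.natCast_dvd_natCast.mpr (hn.dvd_choose_self (by omega) hlt)
      have : X ^ (i + 1) * (-1 : ℤ) ^ (n - (i + 1 + 2)) * (n.choose (i + 1 + 2) : ℤ)
          = (X ^ (i + 1) * (n.choose (i + 1 + 2) : ℤ)) * (-1) ^ (n - (i + 1 + 2)) := by ring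
      rw [this]
      exact Dvd.dvd.mul_right (by rw [sq]; exact mul_dvd_mul hdX hdC) _
  -- n^2 ∤ C(n,2)
  have hC : ¬ (n ^ 2 ∣ n.choose 2) := by
    intro h
    have hc2 : n.choose 2 = n * ((n - 1) / 2) := by
      rw [Nat.choose_two_right, Nat.mul_div_assoc]
      rcases hodd with ⟨t, ht⟩; omega
    rw [hc2, sq] at h
    have : n ∣ (n - 1) / 2 := (Nat.mul_dvd_mul_iff_left hn.pos).mp h
    have h1 : n ≤ (n - 1) / 2 := Nat.le_of_dvd (by omega) this
    have h2 : (n - 1) / 2 ≤ n - 1 := Nat.div_le_self _ _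
    omega
  have hSn2 : ¬ ((n : ℤ) ^ 2 ∣ S) := by
    intro h
    have : (n : ℤ) ^ 2 ∣ (n.choose 2 : ℤ) := (dvd_add_right h).mp hS2
    exact hC (by exact_mod_cast this)
  -- S ≥ 0
  have hSpos : 0 < S := by
    have hS0 : S ≠ 0 := by intro h; exact hSn2 (h ▸ dvd_zero _)
    have hSnn : 0 ≤ S := by
      have hineq : (n : ℤ) * X ≤ (q : ℤ) ^ n + 1 := by
        have h1 : (n : ℤ) * X ≤ X * X := by
          have : (n : ℤ) ≤ X := by rw [hX]; exact_mod_cast hnq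
          have hX0 : (0 : ℤ) ≤ X := by rw [hX]; positivity
          nlinarith
        have h2 : X * X ≤ (q : ℤ) ^ n := by
          have hq3' : (3 : ℤ) ≤ (q : ℤ) := by exact_mod_cast hq3
          have h5 : (q : ℤ) ^ 5 ≤ (q : ℤ) ^ n := pow_le_pow_right₀ (by omega) hn5
          have : X * X ≤ (q : ℤ) ^ 5 := by rw [hX]; nlinarith [pow_nonneg (by omega : (0:ℤ) ≤ q) 3, sq_nonneg ((q:ℤ) - 1)]
          linarith
        linarith
      have hX2 : (0 : ℤ) < X ^ 2 := by rw [hX]; positivity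
      nlinarith [key, hineq, hX2]
    omega
  -- natural version
  set s : ℕ := S.toNat with hs
  have hscast : (s : ℤ) = S := Int.toNat_of_nonneg hSpos.le
  have hkey' : q ^ n + 1 = (q + 1) * n * (1 + k * s) := by
    have : ((q ^ n + 1 : ℕ) : ℤ) = (((q + 1) * n * (1 + k * s) : ℕ) : ℤ) := by
      push_cast
      rw [key, hscast, ← hX]
      linear_combination X * S * hXk
    exact_mod_cast this
  have hA : (q ^ n + 1) / ((q + 1) * n) - 1 = k * s := by
    rw [hkey', Nat.mul_div_cancel_left _ (by positivity)]
    omega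
  have hkn : (q + 1) / n = k := by rw [hk, Nat.mul_div_cancel_left _ hn.pos]
  have hs0 : s ≠ 0 := by
    intro h; rw [h] at hscast; exact absurd hscast.symm (by omega)
  -- n ∣ s, ¬ n^2 ∣ s
  have hns : n ∣ s := by
    have : (n : ℤ) ∣ (s : ℤ) := hscast ▸ hSn
    exact_mod_cast this
  have hns2 : ¬ (n ^ 2 ∣ s) := by
    intro h
    exact hSn2 (hscast ▸ (by exact_mod_cast h : (n : ℤ) ^ 2 ∣ (s : ℤ)))
  have hvs : padicValNat n s = 1 := by
    have h1 : 1 ≤ padicValNat n s := (padicValNat_dvd_iff_le hs0).mp (by simpa using hns)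
    have h2 : ¬ (2 ≤ padicValNat n s) := fun h => hns2 ((padicValNat_dvd_iff_le hs0).mpr h)
    omega
  constructor
  · rw [hA, hkn]; exact Dvd.intro _ rfl
  · rw [hA, hk, padicValNat.mul (by omega) hs0, padicValNat.mul (by omega) (by omega),
      hvs, padicValNat_self]
    omega
end

section
/- Let p be a prime, k ≥ 1, q a power of p, and s ≥ 2, m_1, …, m_s ≥ 1 with p^{k-1} + 1 + m_1 + … + m_s = n. Then p^k · lcm(q^{m_1} - (-1)^{m_1}, …, q^{m_s} - (-1)^{m_s}) ≤ (q+1) · q^{n-3}. -/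
/-!
Each `q^m - (-1)^m` is divisible by `q + 1` and at most `(q + 1) q^(m-1)`, so the common factor
`q + 1` is counted only once in the lcm and the lcm is at most `(q + 1) q^(∑ (m_i - 1))`.
Together with `p^k ≤ q^(p^(k-1))` this gives a power of `q` with exponent
`p^(k-1) + ∑ m_i - s ≤ n - 3`, using `s ≥ 2`.
-/

open Finset

theorem Finset.lcm_le_mul_prod_of_dvd {ι : Type*} {t : Finset ι} {f g : ι → ℤ} {d : ℤ}
    (hd : 0 < d) (hdvd : ∀ i ∈ t, d ∣ f i) (hf : ∀ i ∈ t, 0 < f i)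
    (hfg : ∀ i ∈ t, f i ≤ d * g i) : t.lcm f ≤ d * ∏ i ∈ t, g i := by
  have hquot : ∀ i ∈ t, 0 < f i / d := fun i hi =>
    Int.ediv_pos_of_pos_of_dvd (hf i hi) hd.le (hdvd i hi)
  have hdvd_prod : t.lcm f ∣ d * ∏ i ∈ t, f i / d := Finset.lcm_dvd fun i hi => by
    rw [← Int.mul_ediv_cancel' (hdvd i hi)]
    exact mul_dvd_mul_left d (dvd_prod_of_mem _ hi)
  calc t.lcm f ≤ d * ∏ i ∈ t, f i / d :=
        Int.le_of_dvd (mul_pos hd (prod_pos hquot)) hdvd_prod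
    _ ≤ d * ∏ i ∈ t, g i := by
        gcongr with i hi
        · exact fun j hj => (hquot j hj).le
        · exact Int.ediv_le_of_le_mul hd (mul_comm (g i) d ▸ hfg i hi)

theorem Int.pow_sub_neg_one_pow_pos {q : ℤ} (hq : 2 ≤ q) {m : ℕ} (hm : m ≠ 0) :
    0 < q ^ m - (-1) ^ m := by
  have h2 : 2 ≤ q ^ m := hq.trans (le_self_pow₀ (by omega) hm)
  rcases neg_one_pow_eq_or ℤ m with h | h <;> rw [h] <;> omega

theorem Int.pow_sub_neg_one_pow_le {q : ℤ} (hq : 1 ≤ q) {m : ℕ} (hm : m ≠ 0) :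
    q ^ m - (-1) ^ m ≤ (q + 1) * q ^ (m - 1) := by
  obtain ⟨j, rfl⟩ := Nat.exists_eq_add_one_of_ne_zero hm
  have h1 : 1 ≤ q ^ j := one_le_pow₀ hq
  rw [Nat.add_sub_cancel, pow_succ]
  rcases neg_one_pow_eq_or ℤ (j + 1) with h | h <;> rw [h] <;> nlinarith

theorem Nat.pow_le_pow_pow_pow_pred {p : ℕ} (hp : 2 ≤ p) {e : ℕ} (he : 1 ≤ e) (k : ℕ) :
    p ^ k ≤ (p ^ e) ^ p ^ (k - 1) := by
  have hk : k ≤ p ^ (k - 1) := by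
    have := (Nat.lt_two_pow_self (n := k - 1)).trans_le (Nat.pow_le_pow_left hp _)
    omega
  rw [← pow_mul]
  exact Nat.pow_le_pow_right (by omega) (hk.trans (Nat.le_mul_of_pos_left _ he))

theorem stmt9_general (p : ℕ) (hp : p.Prime) (k : ℕ) (q : ℤ) (e : ℕ) (he : 1 ≤ e)
    (hq : q = (p : ℤ) ^ e) (s : ℕ) (hs : 2 ≤ s) (m : Fin s → ℕ) (hm : ∀ i, 1 ≤ m i)
    (n : ℕ) (hsum : p ^ (k - 1) + 1 + ∑ i, m i = n) :
    (p : ℤ) ^ k * (Finset.univ.lcm fun i : Fin s => q ^ (m i) - (-1) ^ (m i)) ≤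
      (q + 1) * q ^ (n - 3) := by
  have hm0 : ∀ i, m i ≠ 0 := fun i => Nat.one_le_iff_ne_zero.mp (hm i)
  have hq2 : 2 ≤ q := by
    rw [hq]
    exact_mod_cast hp.two_le.trans (Nat.le_self_pow (by omega) p)
  have hlcm : (univ.lcm fun i => q ^ m i - (-1) ^ m i) ≤ (q + 1) * q ^ ∑ i, (m i - 1) := by
    rw [← prod_pow_eq_pow_sum]
    refine Finset.lcm_le_mul_prod_of_dvd (by omega) (fun i _ => ?_)
      (fun i _ => Int.pow_sub_neg_one_pow_pos hq2 (hm0 i))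
      (fun i _ => Int.pow_sub_neg_one_pow_le (by omega) (hm0 i))
    simpa using sub_dvd_pow_sub_pow q (-1) (m i)
  have hpk : (p : ℤ) ^ k ≤ q ^ p ^ (k - 1) := by
    rw [hq]
    exact_mod_cast Nat.pow_le_pow_pow_pow_pred hp.two_le he k
  have hexp : p ^ (k - 1) + ∑ i, (m i - 1) ≤ n - 3 := by
    have hs_le : s ≤ ∑ i, m i := by
      simpa using card_nsmul_le_sum univ m 1 fun i _ => hm i
    rw [sum_tsub_distrib _ fun i _ => hm i]
    simp only [sum_const, card_univ, Fintype.card_fin, smul_eq_mul, mul_one]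
    omega
  calc (p : ℤ) ^ k * (univ.lcm fun i => q ^ m i - (-1) ^ m i)
      ≤ q ^ p ^ (k - 1) * ((q + 1) * q ^ ∑ i, (m i - 1)) := by
        gcongr
        exact Int.nonneg_of_normalize_eq_self normalize_lcm
    _ = (q + 1) * q ^ (p ^ (k - 1) + ∑ i, (m i - 1)) := by ring
    _ ≤ (q + 1) * q ^ (n - 3) := by gcongr; omega

/-- For a prime `p`, `k ≥ 1`, `q` a power of `p`, and `s ≥ 2`, `m_1, …, m_s ≥ 1` with
`p^{k-1} + 1 + m_1 + … + m_s = n`, one has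
`p^k · lcm(q^{m_1} - (-1)^{m_1}, …, q^{m_s} - (-1)^{m_s}) ≤ (q+1)·q^{n-3}`. -/
theorem stmt9 (p : ℕ) (hp : p.Prime) (k : ℕ) (hk : 1 ≤ k) (q : ℤ) (e : ℕ) (he : 1 ≤ e)
    (hq : q = (p : ℤ) ^ e) (s : ℕ) (hs : 2 ≤ s) (m : Fin s → ℕ) (hm : ∀ i, 1 ≤ m i)
    (n : ℕ) (hsum : p ^ (k - 1) + 1 + ∑ i, m i = n) :
    (p : ℤ) ^ k * (Finset.univ.lcm fun i : Fin s => q ^ (m i) - (-1) ^ (m i)) ≤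
      (q + 1) * q ^ (n - 3) :=
  stmt9_general p hp k q e he hq s hs m hm n hsum
end

section
/- There is no prime power q such that (q^23 + 1)/((23, q+1)(q+1)) = 6689. -/
/-- There is no prime power `q` such that `(q^23 + 1)/((23, q+1)(q+1)) = 6689`. -/
theorem stmt11 :
    ¬ ∃ q : ℕ, IsPrimePow q ∧
      (q ^ 23 + 1) / (Nat.gcd 23 (q + 1) * (q + 1)) = 6689 := by
  rintro ⟨q, hq, h⟩
  have hq2 : 2 ≤ q := hq.two_le
  have hdle : Nat.gcd 23 (q + 1) * (q + 1) ≤ 23 * (q + 1) :=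
    Nat.mul_le_mul_right _ (Nat.gcd_le_left _ (by norm_num))
  have hdpos : 0 < Nat.gcd 23 (q + 1) * (q + 1) :=
    Nat.mul_pos (Nat.gcd_pos_of_pos_left _ (by norm_num)) (by omega)
  have h21 : (2:ℕ) ^ 21 ≤ q ^ 21 := Nat.pow_le_pow_left hq2 21
  have key : 6690 * (23 * (q + 1)) ≤ q ^ 23 + 1 := by
    calc 6690 * (23 * (q + 1)) = 153870 * (q + 1) := by ring
      _ ≤ 153870 * (2 * q) := Nat.mul_le_mul_left _ (by omega)
      _ = 307740 * q := by ring
      _ ≤ 2 ^ 21 * q := Nat.mul_le_mul_right _ (by norm_num)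
      _ ≤ q ^ 21 * q := Nat.mul_le_mul_right _ h21
      _ = q ^ 22 := by ring
      _ ≤ q ^ 23 := Nat.pow_le_pow_right (by omega) (by norm_num)
      _ ≤ q ^ 23 + 1 := Nat.le_succ _
  have h1 : 6690 ≤ (q ^ 23 + 1) / (23 * (q + 1)) :=
    (Nat.le_div_iff_mul_le (by positivity)).mpr (by linarith [key])
  have h2 : (q ^ 23 + 1) / (23 * (q + 1)) ≤ (q ^ 23 + 1) / (Nat.gcd 23 (q + 1) * (q + 1)) :=
    Nat.div_le_div_left hdle hdpos
  omega
end
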